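/- There are infinitely many functional unit degrees below ⟨{decr,iszero},Counter⟩: the set of ≡-equivalence classes D of functional units for ℕ such that some H' ∈ D satisfies H' ≤ ⟨{decr,iszero},Counter⟩ is infinite. -/

import Mathlib

/-- Primitive instructions: plain basic `f.m`, positive test `+f.m`, negative test `-f.m`
(method names are natural numbers, there is a single focus `f`), forward jump `#l`,
backward jump `\l`, and the positive/negative termination instructions `!t` / `!f`. -/
inductive Instr : Type where
  | basic (m : ℕ)
  | postest (m : ℕ)
  | negtest (m : ℕ)
  | fjump (l : ℕ)
  | bjump (l : ℕ)
  | haltT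
  | haltF
deriving DecidableEq

/-- A functional unit for a state space `S`: a finite, functional set of
(method name, method operation) pairs, where a method operation is a total
function `S → Bool × S`. -/
structure FU (S : Type*) where
  carrier : Set (ℕ × (S → Bool × S))
  finite : carrier.Finite
  functional : ∀ {m : ℕ} {M M' : S → Bool × S},
    (m, M) ∈ carrier → (m, M') ∈ carrier → M = M'

/-- The interface of a functional unit: the set of method names occurring in it. -/
def FU.iface {S : Type*} (H : FU S) : Set ℕ := {m | ∃ M, (m, M) ∈ H.carrier}

/-- The method operation named `m` in `H` (an arbitrary fixed value if `m ∉ I(H)`). -/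
noncomputable def FU.op {S : Type*} (H : FU S) (m : ℕ) (s : S) : Bool × S :=
  letI := Classical.propDecidable
  if h : ∃ M, (m, M) ∈ H.carrier then h.choose s else (true, s)

/-- The restriction `⟨I, H⟩` of a functional unit to a set `I` of method names. -/
def FU.restrict {S : Type*} (H : FU S) (I : Set ℕ) : FU S where
  carrier := {p ∈ H.carrier | p.1 ∈ I}
  finite := H.finite.subset (Set.sep_subset _ _)
  functional := fun hM hM' => H.functional hM.1 hM'.1

/-- The method names used by an instruction all belong to `I`. -/
def Instr.namesIn (I : Set ℕ) : Instr → Prop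
  | .basic m => m ∈ I
  | .postest m => m ∈ I
  | .negtest m => m ∈ I
  | _ => True

/-- An instruction sequence over a set `I` of method names: a finite nonempty list of
primitive instructions whose method names belong to `I`. -/
def InstrSeqOver (I : Set ℕ) (x : List Instr) : Prop :=
  x ≠ [] ∧ ∀ u ∈ x, u.namesIn I

/-- `Exec H x i s b s'` : execution of the instruction sequence `x` on the functional
unit `H`, from (0-based) position `i` in state `s`, terminates delivering the Boolean
value `b` with final state `s'`.  (Position `i` here corresponds to the 1-based
position `i+1`; positions outside the sequence, jumps `#0`/`\0`, and infinite
executions admit no derivation, i.e. execution does not terminate.) -/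
inductive Exec {S : Type*} (H : FU S) (x : List Instr) : ℕ → S → Bool → S → Prop where
  | basic {i : ℕ} {s : S} {b : Bool} {s' : S} (m : ℕ)
      (hu : x[i]? = some (Instr.basic m))
      (h : Exec H x (i + 1) (H.op m s).2 b s') : Exec H x i s b s'
  | posT {i : ℕ} {s : S} {b : Bool} {s' : S} (m : ℕ)
      (hu : x[i]? = some (Instr.postest m)) (hr : (H.op m s).1 = true)
      (h : Exec H x (i + 1) (H.op m s).2 b s') : Exec H x i s b s'
  | posF {i : ℕ} {s : S} {b : Bool} {s' : S} (m : ℕ)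
      (hu : x[i]? = some (Instr.postest m)) (hr : (H.op m s).1 = false)
      (h : Exec H x (i + 2) (H.op m s).2 b s') : Exec H x i s b s'
  | negT {i : ℕ} {s : S} {b : Bool} {s' : S} (m : ℕ)
      (hu : x[i]? = some (Instr.negtest m)) (hr : (H.op m s).1 = true)
      (h : Exec H x (i + 2) (H.op m s).2 b s') : Exec H x i s b s'
  | negF {i : ℕ} {s : S} {b : Bool} {s' : S} (m : ℕ)
      (hu : x[i]? = some (Instr.negtest m)) (hr : (H.op m s).1 = false)
      (h : Exec H x (i + 1) (H.op m s).2 b s') : Exec H x i s b s'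
  | fjump {i : ℕ} {s : S} {b : Bool} {s' : S} (l : ℕ)
      (hu : x[i]? = some (Instr.fjump l))
      (h : Exec H x (i + l) s b s') : Exec H x i s b s'
  | bjump {i : ℕ} {s : S} {b : Bool} {s' : S} (l : ℕ)
      (hu : x[i]? = some (Instr.bjump l)) (hl : l ≤ i)
      (h : Exec H x (i - l) s b s') : Exec H x i s b s'
  | haltT {i : ℕ} {s : S} (hu : x[i]? = some Instr.haltT) : Exec H x i s true s
  | haltF {i : ℕ} {s : S} (hu : x[i]? = some Instr.haltF) : Exec H x i s false s

/-- `M` is a derived method operation of `H`: there is an instruction sequence `x`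
over `I(H)` whose produced partial method operation `⌈x⌉_H` is total and equals `M`. -/
def DerivedOp {S : Type*} (H : FU S) (M : S → Bool × S) : Prop :=
  ∃ x : List Instr, InstrSeqOver H.iface x ∧ ∀ s, Exec H x 0 s (M s).1 (M s).2

/-- `H ≤ H'` : every method operation of `H` is a derived method operation of `H'`. -/
def FU.le {S : Type*} (H H' : FU S) : Prop :=
  ∀ m M, (m, M) ∈ H.carrier → DerivedOp H' M

/-- `H ≡ H'` : `H ≤ H'` and `H' ≤ H`. -/
def FU.equiv {S : Type*} (H H' : FU S) : Prop := FU.le H H' ∧ FU.le H' H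

/-- A method operation on ℕ is computable if both its components are. -/
def ComputableMO (M : ℕ → Bool × ℕ) : Prop :=
  Computable (fun n => (M n).1) ∧ Computable (fun n => (M n).2)

/-- A functional unit for ℕ is computable if all its method operations are. -/
def ComputableFU (H : FU ℕ) : Prop :=
  ∀ m M, (m, M) ∈ H.carrier → ComputableMO M

/-- Setzero(x) = (true, 0). -/
def Setzero : ℕ → Bool × ℕ := fun _ => (true, 0)

/-- Incr(x) = (true, x+1). -/
def Incr : ℕ → Bool × ℕ := fun x => (true, x + 1)

/-- Decr(x) = (true, x−1) for x > 0, Decr(0) = (false, 0). -/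
def Decr : ℕ → Bool × ℕ := fun x => if x = 0 then (false, 0) else (true, x - 1)

/-- Iszero(x) = (true, x) for x = 0, (false, x) for x > 0. -/
def Iszero : ℕ → Bool × ℕ := fun x => if x = 0 then (true, x) else (false, x)

/-- The unbounded counter functional unit, with method names
setzero = 0, incr = 1, decr = 2, iszero = 3. -/
def Counter : FU ℕ where
  carrier := {(0, Setzero), (1, Incr), (2, Decr), (3, Iszero)}
  finite := (((Set.finite_singleton _).insert _).insert _).insert _
  functional := by
    rintro m M M' hM hM'
    simp only [Set.mem_insert_iff, Set.mem_singleton_iff, Prod.mk.injEq] at hM hM'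
    rcases hM with ⟨rfl, rfl⟩ | ⟨rfl, rfl⟩ | ⟨rfl, rfl⟩ | ⟨rfl, rfl⟩ <;>
      rcases hM' with ⟨h, rfl⟩ | ⟨h, rfl⟩ | ⟨h, rfl⟩ | ⟨h, rfl⟩ <;>
        first | rfl | simp at h

/-!
For `n : ℕ` let `decrByUnit n` be the functional unit whose only method subtracts `n`
(truncated at `0`) and always replies `true`. Running `decr` `n` times derives this method in
`⟨{decr, iszero}, Counter⟩`, so all these units lie below it. Conversely, every method of
`decrByUnit b` moves the state from `s` to `s - j * b`, so the final state of any execution on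
`decrByUnit b` is `s - k * b` for some `k`; deriving `s ↦ s - a` and starting from `a + 1`
forces `k * b = a`. Hence `decrByUnit a ≡ decrByUnit b` only if `a ∣ b` and `b ∣ a`, and the
units `decrByUnit n` lie in pairwise distinct degrees.
-/

namespace FU

variable {S : Type*}

lemma op_eq_of_mem {H : FU S} {m : ℕ} {M : S → Bool × S} (h : (m, M) ∈ H.carrier) :
    H.op m = M := by
  have hex : ∃ M', (m, M') ∈ H.carrier := ⟨M, h⟩
  funext s
  simp only [FU.op, dif_pos hex]
  rw [H.functional hex.choose_spec h]

lemma op_of_not_mem_iface {H : FU S} {m : ℕ} (h : m ∉ H.iface) (s : S) :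
    H.op m s = (true, s) := by
  simp only [FU.op]
  exact dif_neg h

def single (m : ℕ) (M : S → Bool × S) : FU S where
  carrier := {(m, M)}
  finite := Set.finite_singleton _
  functional := by
    rintro m' N N' hN hN'
    rw [Set.mem_singleton_iff, Prod.mk.injEq] at hN hN'
    rw [hN.2, hN'.2]

lemma mem_single (m : ℕ) (M : S → Bool × S) : (m, M) ∈ (single m M).carrier := rfl

lemma iface_single (m : ℕ) (M : S → Bool × S) : (single m M).iface = {m} := by
  ext m'
  simp [FU.iface, single]

lemma op_single (m : ℕ) (M : S → Bool × S) : (single m M).op m = M :=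
  op_eq_of_mem (mem_single m M)

lemma op_single_of_ne {m m' : ℕ} (M : S → Bool × S) (h : m' ≠ m) (s : S) :
    (single m M).op m' s = (true, s) :=
  op_of_not_mem_iface (by rwa [iface_single]) s

lemma le_single_iff {M : S → Bool × S} {H : FU S} {m : ℕ} :
    (single m M).le H ↔ DerivedOp H M := by
  refine ⟨fun h => h m M (mem_single m M), ?_⟩
  rintro hM m' N hN
  obtain ⟨-, rfl⟩ := Prod.mk.inj hN
  exact hM

lemma derivedOp_of_mem {H : FU S} {m : ℕ} {M : S → Bool × S} (h : (m, M) ∈ H.carrier) :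
    DerivedOp H M := by
  refine ⟨[.postest m, .haltT, .haltF], ⟨List.cons_ne_nil _ _, ?_⟩, fun s => ?_⟩
  · simp only [List.mem_cons, List.not_mem_nil, or_false]
    rintro u (rfl | rfl | rfl)
    exacts [⟨M, h⟩, trivial, trivial]
  · rw [← op_eq_of_mem h]
    cases hr : (H.op m s).1
    · exact .posF m rfl hr (.haltF rfl)
    · exact .posT m rfl hr (.haltT rfl)

lemma le_refl (H : FU S) : H.le H := fun _ _ => derivedOp_of_mem

lemma equiv_refl (H : FU S) : H.equiv H := ⟨le_refl H, le_refl H⟩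

end FU

section Exec

variable {S : Type*} {H : FU S} {x : List Instr}

lemma Exec.reflTransGen {i : ℕ} {s s' : S} {b : Bool} (h : Exec H x i s b s') :
    Relation.ReflTransGen (fun t t' => ∃ m, (H.op m t).2 = t') s s' := by
  induction h with
  | basic m _ _ ih | posT m _ _ _ ih | posF m _ _ _ ih | negT m _ _ _ ih | negF m _ _ _ ih =>
    exact .head ⟨m, rfl⟩ ih
  | fjump _ _ _ ih | bjump _ _ _ _ ih => exact ih
  | haltT _ | haltF _ => exact .refl

lemma exec_replicate_basic_haltT (m n : ℕ) :
    ∀ a ≤ n, ∀ s : S, Exec H (List.replicate n (.basic m) ++ [.haltT]) (n - a) s true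
      ((fun t => (H.op m t).2)^[a] s) := by
  intro a
  induction a with
  | zero =>
    intro _ s
    exact .haltT (by simp)
  | succ a ih =>
    intro ha s
    refine .basic m ?_ ?_
    · rw [List.getElem?_append_left (by rw [List.length_replicate]; omega),
        List.getElem?_replicate_of_lt (by omega)]
    · rw [show n - (a + 1) + 1 = n - a by omega, Function.iterate_succ_apply]
      exact ih (by omega) _

lemma derivedOp_iterate {m : ℕ} (hm : m ∈ H.iface) (n : ℕ) :
    DerivedOp H (fun s => (true, (fun t => (H.op m t).2)^[n] s)) := by
  refine ⟨List.replicate n (.basic m) ++ [.haltT], ⟨by simp, ?_⟩, fun s => ?_⟩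
  · simp only [List.mem_append, List.mem_replicate, List.mem_singleton]
    rintro u ((⟨-, rfl⟩) | rfl)
    exacts [hm, trivial]
  · simpa using exec_replicate_basic_haltT m n n le_rfl s

end Exec

def decrBy (n : ℕ) : ℕ → Bool × ℕ := fun s => (true, s - n)

abbrev decrByUnit (n : ℕ) : FU ℕ := FU.single 0 (decrBy n)

lemma exists_decrByUnit_op_snd (b m s : ℕ) : ∃ j, ((decrByUnit b).op m s).2 = s - j * b := by
  by_cases hm : m = 0
  · exact ⟨1, by rw [hm, FU.op_single, decrBy, one_mul]⟩
  · exact ⟨0, by rw [FU.op_single_of_ne _ hm, zero_mul, Nat.sub_zero]⟩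

lemma Exec.exists_eq_sub_mul_of_decrByUnit {b : ℕ} {x : List Instr} {i s s' : ℕ} {r : Bool}
    (h : Exec (decrByUnit b) x i s r s') : ∃ k, s' = s - k * b := by
  have hchain := h.reflTransGen
  clear h
  induction hchain with
  | refl => exact ⟨0, by simp⟩
  | tail _ hstep ih =>
    obtain ⟨k, rfl⟩ := ih
    obtain ⟨m, rfl⟩ := hstep
    obtain ⟨j, hj⟩ := exists_decrByUnit_op_snd b m (s - k * b)
    exact ⟨k + j, by rw [hj, Nat.sub_sub, add_mul]⟩

lemma dvd_of_decrByUnit_le {a b : ℕ} (h : (decrByUnit a).le (decrByUnit b)) : b ∣ a := by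
  obtain ⟨x, -, hx⟩ := FU.le_single_iff.1 h
  -- from `a + 1` the result `1` is positive, so the subtraction `k * b` was not truncated
  obtain ⟨k, hk⟩ := (hx (a + 1)).exists_eq_sub_mul_of_decrByUnit
  simp only [decrBy, Nat.add_sub_cancel_left] at hk
  exact ⟨k, by rw [mul_comm]; omega⟩

lemma eq_of_decrByUnit_equiv {a b : ℕ} (h : (decrByUnit a).equiv (decrByUnit b)) :
    a = b :=
  Nat.dvd_antisymm (dvd_of_decrByUnit_le h.2) (dvd_of_decrByUnit_le h.1)

lemma iterate_decr_snd (n s : ℕ) : (fun t => (Decr t).2)^[n] s = s - n := by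
  induction n with
  | zero => rfl
  | succ n ih =>
    rw [Function.iterate_succ_apply', ih, Decr]
    split <;> omega

lemma decrByUnit_le_decr_iszero (n : ℕ) : (decrByUnit n).le (Counter.restrict {2, 3}) := by
  have hdecr : ((2 : ℕ), Decr) ∈ (Counter.restrict {2, 3}).carrier := by
    simp [FU.restrict, Counter]
  refine FU.le_single_iff.2 ?_
  unfold decrBy
  have := derivedOp_iterate ⟨Decr, hdecr⟩ n
  simpa only [FU.op_eq_of_mem hdecr, iterate_decr_snd] using this

/-- There are infinitely many functional unit degrees (≡-equivalence classes) below
`⟨{decr, iszero}, Counter⟩`. -/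
theorem infinitely_many_degrees_below :
    {D : Set (FU ℕ) | (∃ H : FU ℕ, D = {H' | FU.equiv H' H}) ∧
      ∃ H' ∈ D, FU.le H' (Counter.restrict {2, 3})}.Infinite := by
  refine Set.infinite_of_injective_forall_mem (f := fun n => {H' | FU.equiv H' (decrByUnit n)})
    (fun a b hab => ?_) fun n =>
      ⟨⟨decrByUnit n, rfl⟩, decrByUnit n, FU.equiv_refl _, decrByUnit_le_decr_iszero n⟩
  exact eq_of_decrByUnit_equiv ((Set.ext_iff.1 hab (decrByUnit a)).1 (FU.equiv_refl _))
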